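/- arXiv:2308.01522 — 2 statements merged into one kernel-verified Lean document; each statement's English description precedes it below -/
import Mathlib

section
/- Let N_q^A(D_d) be the number of points in affine n-space over F_q on the diagonal hypersurface x₁^d + x₂^d + ⋯ + x_n^d = 0, and let t = gcd(d, q-1). Then N_q^A(D_d) = q^{n-1} - (q-1)·∑_{w*} J(T^{w₁(q-1)/t}, …, T^{w_n(q-1)/t}), where the sum is over all tuples w* = (w₁,…,w_n) with 0 < w_i < t for each i and ∑ w_i ≡ 0 (mod t), and T is a fixed generator of the character group of F_q^*. -/
/-- The Jacobi sum J(χ₁,…,χ_k) with target α. -/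
noncomputable def Jsum {F : Type} [Field F] [Fintype F] [DecidableEq F]
    (k : ℕ) (χ : Fin k → MulChar F ℂ) (α : F) : ℂ :=
  ∑ t ∈ Finset.univ.filter (fun t : Fin k → F => ∑ i, t i = α), ∏ i, χ i (t i)

/-!
Let `t = gcd(d, q - 1)` and `ψ = T ^ ((q - 1) / t)`, a character of order `t`. Both
`#{x | x ^ d = b}` and `∑_{j < t} ψ ^ j (b)` (with `ψ ^ 0 = 1` also at `0`) equal `t` or `0`
according as `b` is a `d`-th power or not, so the point count is
`∑_w ∑_{a₁ + ⋯ + aₙ = 0} ∏ ψ ^ wᵢ (aᵢ)`. The tuple `w = 0` gives `q ^ (n - 1)`. If some but not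
all `wᵢ` vanish, a coordinate with `wᵢ = 0` absorbs the constraint, leaving a full sum of a
nontrivial character, so the term is `0`. If no `wᵢ` vanishes, the term is the Jacobi sum at `0`:
the Jacobi sums over all targets add up to `0`, and the one at `c ≠ 0` is `(∏ ψ ^ wᵢ)(c)` times
the one at `1`; this gives `-(q - 1) J(…; 1)` when `t ∣ ∑ wᵢ` and `0` otherwise.
-/

open Finset

namespace IsCyclic

variable {G : Type*} [CommGroup G] [IsCyclic G]

theorem range_powMonoidHom_eq_ker [Finite G] (d : ℕ) :
    (powMonoidHom d : G →* G).range =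
      (powMonoidHom (Nat.card G / (Nat.card G).gcd d)).ker := by
  apply Subgroup.eq_of_le_of_card_ge
  · have hdvd : Nat.card G ∣ d * (Nat.card G / (Nat.card G).gcd d) := by
      obtain ⟨k, hk⟩ := Nat.gcd_dvd_right (Nat.card G) d
      nth_rw 1 [hk, mul_comm _ k, mul_assoc, Nat.mul_div_cancel' (Nat.gcd_dvd_left _ _)]
      exact dvd_mul_left _ _
    rintro _ ⟨x, rfl⟩
    rw [MonoidHom.mem_ker, powMonoidHom_apply, powMonoidHom_apply, ← pow_mul,
      ← orderOf_dvd_iff_pow_eq_one]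
    exact orderOf_dvd_natCard x |>.trans hdvd
  · rw [card_powMonoidHom_ker, card_powMonoidHom_range]
    exact Nat.gcd_le_right _ (Nat.div_pos (Nat.gcd_le_left d Nat.card_pos)
      (Nat.gcd_pos_of_pos_left d Nat.card_pos))

theorem card_filter_pow_eq [Fintype G] [DecidableEq G] (d : ℕ) (u : G) :
    #{x | x ^ d = u} =
      if u ^ (Nat.card G / (Nat.card G).gcd d) = 1 then (Nat.card G).gcd d else 0 := by
  have hrange : u ∈ Set.range (powMonoidHom d : G →* G) ↔
      u ^ (Nat.card G / (Nat.card G).gcd d) = 1 := by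
    rw [← MonoidHom.coe_range, SetLike.mem_coe, range_powMonoidHom_eq_ker]
    rfl
  split_ifs with hu
  · change #{x | powMonoidHom d x = u} = _
    rw [MonoidHom.card_fiber_eq_of_mem_range _ (hrange.mpr hu) ⟨1, one_pow d⟩,
      ← card_powMonoidHom_ker, Nat.card_eq_fintype_card, ← Fintype.card_subtype]
    exact Fintype.card_congr (Equiv.refl _)
  · rw [card_eq_zero, filter_eq_empty_iff]
    exact fun x _ hx => hu (hrange.mp ⟨x, hx⟩)

end IsCyclic

theorem FiniteField.card_filter_pow_eq_of_ne_zero {F : Type*} [Field F] [Fintype F]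
    [DecidableEq F] {d : ℕ} (hd : d ≠ 0) {b : F} (hb : b ≠ 0) :
    #{x : F | x ^ d = b} =
      if b ^ ((Fintype.card F - 1) / d.gcd (Fintype.card F - 1)) = 1
      then d.gcd (Fintype.card F - 1) else 0 := by
  have hunits : #{x : F | x ^ d = b} = #{u : Fˣ | u ^ d = Units.mk0 b hb} := by
    refine (card_bij (fun (u : Fˣ) _ => (u : F)) ?_ (fun _ _ _ _ => Units.ext) ?_).symm
    · intro u hu
      simp only [mem_filter_univ, Units.ext_iff, Units.val_pow_eq_pow_val, Units.val_mk0] at hu ⊢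
      exact hu
    · intro x hx
      rw [mem_filter_univ] at hx
      have hx0 : x ≠ 0 := by
        rintro rfl
        exact hb (by rw [← hx, zero_pow hd])
      exact ⟨Units.mk0 x hx0, by simp [Units.ext_iff, hx], rfl⟩
  rw [hunits, IsCyclic.card_filter_pow_eq, Nat.card_eq_fintype_card, Fintype.card_units,
    Nat.gcd_comm]
  simp only [Units.ext_iff, Units.val_pow_eq_pow_val, Units.val_mk0, Units.val_one]

namespace MulChar

theorem sum_range_pow_apply_coe {M R : Type*} [CommMonoid M] [Field R] [DecidableEq R]
    {ψ : MulChar M R} {t : ℕ} (hψ : ψ ^ t = 1) (a : Mˣ) :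
    ∑ j ∈ range t, (ψ ^ j) a = if ψ a = 1 then (t : R) else 0 := by
  simp_rw [pow_apply_coe]
  split_ifs with h
  · simp [h]
  · rw [geom_sum_eq h, ← pow_apply_coe, hψ, one_apply_coe, sub_self, zero_div]

theorem prod_apply_coe {M R : Type*} [CommMonoid M] [CommMonoidWithZero R] {ι : Type*}
    (s : Finset ι) (χ : ι → MulChar M R) (a : Mˣ) :
    (∏ i ∈ s, χ i) a = ∏ i ∈ s, χ i a := by
  induction s using Finset.cons_induction with
  | empty => exact one_apply_coe a
  | cons i s hi ih => rw [prod_cons, coeToFun_mul, Pi.mul_apply, ih, prod_cons]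

section ExtendedPow

variable {M R : Type*} [CommMonoid M] [CommMonoidWithZero R]

/-- `ψ ^ j`, with the convention that `ψ ^ 0` is the constant function `1`, also at non-units. -/
noncomputable def extendedPow (ψ : MulChar M R) (j : ℕ) (a : M) : R :=
  if j = 0 then 1 else (ψ ^ j) a

theorem extendedPow_zero (ψ : MulChar M R) : extendedPow ψ 0 = 1 :=
  funext fun _ => if_pos rfl

theorem extendedPow_of_ne_zero (ψ : MulChar M R) {j : ℕ} (hj : j ≠ 0) :
    extendedPow ψ j = ⇑(ψ ^ j) :=
  funext fun _ => if_neg hj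

end ExtendedPow

section Generator

variable {F : Type*} [Field F] [Fintype F] {T : MulChar F ℂ}

theorem orderOf_eq_card_sub_one_of_forall_eq_pow
    (hT : ∀ χ : MulChar F ℂ, ∃ k : ℕ, χ = T ^ k) : orderOf T = Fintype.card F - 1 := by
  classical
  have : NeZero (Monoid.exponent Fˣ) := ⟨Monoid.exponent_ne_zero_of_finite⟩
  rw [orderOf_eq_card_of_forall_mem_zpowers, card_eq_card_units_of_hasEnoughRootsOfUnity,
    Nat.card_eq_fintype_card, Fintype.card_units]
  intro χ
  obtain ⟨k, rfl⟩ := hT χ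
  exact Subgroup.pow_mem _ (Subgroup.mem_zpowers T) k

theorem apply_eq_one_iff_of_forall_eq_pow (hT : ∀ χ : MulChar F ℂ, ∃ k : ℕ, χ = T ^ k)
    {a : F} (ha : a ≠ 0) : T a = 1 ↔ a = 1 := by
  have : NeZero (Monoid.exponent Fˣ) := ⟨Monoid.exponent_ne_zero_of_finite⟩
  refine ⟨fun h => ?_, fun h => h ▸ map_one T⟩
  by_contra hne
  obtain ⟨χ, hχ⟩ := exists_apply_ne_one_of_hasEnoughRootsOfUnity F ℂ hne
  obtain ⟨k, rfl⟩ := hT χ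
  obtain ⟨u, rfl⟩ := ha.isUnit
  exact hχ (by rw [pow_apply_coe, h, one_pow])

theorem orderOf_pow_div_gcd_of_forall_eq_pow (hT : ∀ χ : MulChar F ℂ, ∃ k : ℕ, χ = T ^ k)
    (d : ℕ) :
    orderOf (T ^ ((Fintype.card F - 1) / d.gcd (Fintype.card F - 1))) =
      d.gcd (Fintype.card F - 1) := by
  have hq : 0 < Fintype.card F - 1 := Nat.sub_pos_of_lt Fintype.one_lt_card
  have hdvd := Nat.gcd_dvd_right d (Fintype.card F - 1)
  have hm : (Fintype.card F - 1) / d.gcd (Fintype.card F - 1) ≠ 0 :=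
    (Nat.div_pos (Nat.le_of_dvd hq hdvd) (Nat.pos_of_dvd_of_pos hdvd hq)).ne'
  rw [orderOf_pow_of_dvd hm, orderOf_eq_card_sub_one_of_forall_eq_pow hT,
    Nat.div_div_self hdvd hq.ne']
  rw [orderOf_eq_card_sub_one_of_forall_eq_pow hT]
  exact Nat.div_dvd_of_dvd hdvd

theorem card_filter_pow_eq_sum_extendedPow [DecidableEq F]
    (hT : ∀ χ : MulChar F ℂ, ∃ k : ℕ, χ = T ^ k) {d : ℕ} (hd : d ≠ 0) (b : F) :
    (#{x : F | x ^ d = b} : ℂ) = ∑ j ∈ range (d.gcd (Fintype.card F - 1)),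
      extendedPow (T ^ ((Fintype.card F - 1) / d.gcd (Fintype.card F - 1))) j b := by
  set ψ := T ^ ((Fintype.card F - 1) / d.gcd (Fintype.card F - 1))
  have ht : 0 < d.gcd (Fintype.card F - 1) := Nat.gcd_pos_of_pos_left _ (Nat.pos_of_ne_zero hd)
  rcases eq_or_ne b 0 with rfl | hb
  · have hzero : #{x : F | x ^ d = 0} = 1 := by
      simp [pow_eq_zero_iff hd, filter_eq']
    rw [hzero, sum_eq_single_of_mem 0 (mem_range.mpr ht) fun j _ hj => ?_]
    · simp [extendedPow_zero]
    · rw [extendedPow_of_ne_zero ψ hj, MulChar.map_zero]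
  · obtain ⟨u, rfl⟩ := hb.isUnit
    have hψ : ψ ^ d.gcd (Fintype.card F - 1) = 1 := by
      rw [← orderOf_pow_div_gcd_of_forall_eq_pow hT d]
      exact pow_orderOf_eq_one ψ
    have hext : ∀ j, extendedPow ψ j u = (ψ ^ j) u := fun j => by
      rcases eq_or_ne j 0 with rfl | hj
      · simp [extendedPow_zero]
      · rw [extendedPow_of_ne_zero ψ hj]
    have hcrit :
        ψ u = 1 ↔ (u : F) ^ ((Fintype.card F - 1) / d.gcd (Fintype.card F - 1)) = 1 := by
      rw [pow_apply_coe, ← map_pow, apply_eq_one_iff_of_forall_eq_pow hT (pow_ne_zero _ hb)]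
    simp_rw [hext, sum_range_pow_apply_coe hψ, hcrit,
      FiniteField.card_filter_pow_eq_of_ne_zero hd hb]
    split_ifs <;> simp

end Generator

end MulChar

section AddConv

variable {R M : Type*} [AddCommMonoid R] [Fintype R] [DecidableEq R] [CommSemiring M] {n : ℕ}

def addConv (f : Fin n → R → M) (c : R) : M :=
  ∑ a : Fin n → R with ∑ i, a i = c, ∏ i, f i (a i)

theorem card_filter_sum_eq_addConv (g : R → R) (c : R) :
    (#{x : Fin n → R | ∑ i, g (x i) = c} : M) =
      addConv (n := n) (fun _ b => (#{x | g x = b} : M)) c := by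
  rw [card_eq_sum_card_fiberwise (f := fun x i => g (x i)) (t := {a | ∑ i, a i = c})
    (fun x hx => by simpa using hx)]
  push_cast
  refine sum_congr rfl fun a ha => ?_
  rw [mem_filter_univ] at ha
  have hfiber : ({x | ∑ i, g (x i) = c} : Finset (Fin n → R)).filter
      (fun x => (fun i => g (x i)) = a) = Fintype.piFinset fun i => {y | g y = a i} := by
    ext x
    simp only [mem_filter, mem_univ, true_and, Fintype.mem_piFinset, funext_iff]
    exact ⟨And.right, fun h => ⟨by simp_rw [h]; exact ha, h⟩⟩
  rw [hfiber, Fintype.card_piFinset]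
  push_cast
  rfl

theorem sum_addConv (f : Fin n → R → M) : ∑ c, addConv f c = ∏ i, ∑ x, f i x := by
  rw [Fintype.prod_sum]
  exact sum_fiberwise_of_maps_to (fun a _ => mem_univ _) _

theorem addConv_sum {ι : Type*} (s : Finset ι) (g : Fin n → ι → R → M) (c : R) :
    addConv (fun i b => ∑ j ∈ s, g i j b) c =
      ∑ w ∈ Fintype.piFinset fun _ => s, addConv (fun i => g i (w i)) c := by
  unfold addConv
  simp_rw [prod_univ_sum]
  exact sum_comm

end AddConv

/-- The coordinate `a i₀ = c - ∑_{i ≠ i₀} a i` is determined by the others and contributes `1`. -/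
theorem addConv_of_eq_one {R M : Type*} [AddCommGroup R] [Fintype R] [DecidableEq R]
    [CommSemiring M] {n : ℕ} (f : Fin (n + 1) → R → M) (i₀ : Fin (n + 1))
    (hf : ∀ x, f i₀ x = 1) (c : R) :
    addConv f c = ∏ j, ∑ x, f (i₀.succAbove j) x := by
  rw [Fintype.prod_sum]
  refine sum_nbij' (fun a => i₀.removeNth a) (fun b => i₀.insertNth (c - ∑ j, b j) b)
    (fun _ _ => mem_univ _) ?_ ?_ ?_ ?_
  · intro b _
    simp [Fin.sum_univ_succAbove _ i₀]
  · intro a ha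
    rw [mem_filter_univ, Fin.sum_univ_succAbove _ i₀] at ha
    simp [Fin.insertNth_removeNth, ← ha, Fin.removeNth]
  · intro b _
    exact Fin.removeNth_insertNth _ _ _
  · intro a _
    rw [Fin.prod_univ_succAbove _ i₀, hf, one_mul]
    rfl

section JacobiSum

variable {F : Type} [Field F] [Fintype F] [DecidableEq F] {n : ℕ}

theorem Jsum_eq_addConv (χ : Fin n → MulChar F ℂ) (c : F) :
    Jsum n χ c = addConv (fun i => χ i) c :=
  rfl

theorem Jsum_eq_apply_mul_Jsum_one (χ : Fin n → MulChar F ℂ) {c : F} (hc : c ≠ 0) :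
    Jsum n χ c = (∏ i, χ i) c * Jsum n χ 1 := by
  obtain ⟨u, rfl⟩ := hc.isUnit
  rw [MulChar.prod_apply_coe, Jsum, Jsum, mul_sum]
  refine sum_nbij' (fun a i => u⁻¹ * a i) (fun b i => u * b i) ?_ ?_ ?_ ?_ ?_
  · intro a ha
    rw [mem_filter_univ] at ha ⊢
    rw [← mul_sum, ha, Units.inv_mul]
  · intro b hb
    rw [mem_filter_univ] at hb ⊢
    rw [← mul_sum, hb, mul_one]
  · intro a _
    simp
  · intro b _
    simp
  · intro a _
    rw [← prod_mul_distrib]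
    refine prod_congr rfl fun i _ => ?_
    rw [← map_mul, Units.mul_inv_cancel_left]

theorem Jsum_zero_eq (χ : Fin n → MulChar F ℂ) (hχ : ∃ i, χ i ≠ 1) :
    Jsum n χ 0 =
      if ∏ i, χ i = 1 then -((Fintype.card F : ℂ) - 1) * Jsum n χ 1 else 0 := by
  have htotal : ∑ c, Jsum n χ c = 0 := by
    obtain ⟨i, hi⟩ := hχ
    simp_rw [Jsum_eq_addConv, sum_addConv]
    exact prod_eq_zero (mem_univ i) (MulChar.sum_eq_zero_of_ne_one hi)
  have hunits :
      ∑ c ∈ univ.erase 0, Jsum n χ c = (∑ c, (∏ i, χ i) c) * Jsum n χ 1 := by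
    rw [← sum_erase univ (MulChar.map_zero (∏ i, χ i)), sum_mul]
    exact sum_congr rfl fun c hc => Jsum_eq_apply_mul_Jsum_one χ (ne_of_mem_erase hc)
  have hchar :
      ∑ c, (∏ i, χ i) c = if ∏ i, χ i = 1 then (Fintype.card F : ℂ) - 1 else 0 := by
    split_ifs with h
    · rw [h, MulChar.sum_one_eq_card_units, Fintype.card_units,
        Nat.cast_sub Fintype.card_pos, Nat.cast_one]
    · exact MulChar.sum_eq_zero_of_ne_one h
  rw [← add_sum_erase _ _ (mem_univ 0), hunits, hchar] at htotal
  rw [eq_neg_of_add_eq_zero_left htotal]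
  split_ifs <;> ring

open MulChar in
theorem addConv_extendedPow (ψ : MulChar F ℂ) {w : Fin (n + 1) → ℕ}
    (hw : ∀ i, w i < orderOf ψ) :
    addConv (fun i => extendedPow ψ (w i)) 0 =
      (if w = 0 then (Fintype.card F : ℂ) ^ n else 0) +
        if (∀ i, 0 < w i) ∧ orderOf ψ ∣ ∑ i, w i then
          -((Fintype.card F : ℂ) - 1) * Jsum (n + 1) (fun i => ψ ^ w i) 1
        else 0 := by
  by_cases hpos : ∀ i, 0 < w i
  · have hw0 : w ≠ 0 := fun h => (hpos 0).ne' (congrFun h 0)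
    have hJ :
        addConv (fun i => extendedPow ψ (w i)) 0 = Jsum (n + 1) (fun i => ψ ^ w i) 0 := by
      rw [Jsum_eq_addConv]
      simp_rw [extendedPow_of_ne_zero ψ (hpos _).ne']
    rw [hJ, Jsum_zero_eq _ ⟨0, pow_ne_one_of_lt_orderOf (hpos 0).ne' (hw 0)⟩,
      prod_pow_eq_pow_sum]
    simp [hw0, hpos, orderOf_dvd_iff_pow_eq_one]
  · obtain ⟨i₀, hi₀⟩ : ∃ i, w i = 0 := by simpa using hpos
    rw [addConv_of_eq_one _ i₀ (fun x => by rw [hi₀, extendedPow_zero, Pi.one_apply])]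
    simp only [hpos, false_and, if_false, add_zero]
    split_ifs with hw0
    · simp [hw0, extendedPow_zero]
    · obtain ⟨i₁, hi₁⟩ : ∃ i, w i ≠ 0 := by simpa [funext_iff] using hw0
      obtain ⟨j, rfl⟩ :=
        Fin.exists_succAbove_eq (x := i₁) (y := i₀) (by rintro rfl; exact hi₁ hi₀)
      refine prod_eq_zero (mem_univ j) ?_
      rw [extendedPow_of_ne_zero ψ hi₁]
      exact sum_eq_zero_of_ne_one (pow_ne_one_of_lt_orderOf hi₁ (hw _))

end JacobiSum

/-- Weil: the number of affine points on x₁^d + ⋯ + x_n^d = 0 equals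
q^{n-1} - (q-1)·∑_{w*} J(T^{w₁(q-1)/t},…,T^{w_n(q-1)/t}), sum over 0 < wᵢ < t,
t ∣ ∑wᵢ, where t = gcd(d, q-1) and T generates the character group. -/
theorem weil_diagonal_count {F : Type} [Field F] [Fintype F] [DecidableEq F]
    (n d : ℕ) (hn : 0 < n) (hd : 0 < d)
    (T : MulChar F ℂ) (hT : ∀ χ : MulChar F ℂ, ∃ k : ℕ, χ = T ^ k) :
    (Fintype.card {x : Fin n → F // ∑ i, x i ^ d = 0} : ℂ) =
      (Fintype.card F : ℂ) ^ (n - 1) -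
        ((Fintype.card F : ℂ) - 1) *
          ∑ w ∈ (Fintype.piFinset fun _ : Fin n =>
                Finset.range (Nat.gcd d (Fintype.card F - 1))).filter
              (fun w => (∀ i, 0 < w i) ∧ Nat.gcd d (Fintype.card F - 1) ∣ ∑ i, w i),
            Jsum n (fun i =>
              T ^ (w i * ((Fintype.card F - 1) / Nat.gcd d (Fintype.card F - 1)))) 1 := by
  obtain ⟨n, rfl⟩ := Nat.exists_eq_add_one_of_ne_zero hn.ne'
  have hψ := MulChar.orderOf_pow_div_gcd_of_forall_eq_pow hT d
  have ht : 0 < d.gcd (Fintype.card F - 1) := Nat.gcd_pos_of_pos_left _ hd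
  rw [Fintype.card_subtype, card_filter_sum_eq_addConv (fun x => x ^ d)]
  simp_rw [MulChar.card_filter_pow_eq_sum_extendedPow hT hd.ne']
  have hzero_mem :
      (0 : Fin (n + 1) → ℕ) ∈ Fintype.piFinset fun _ => range (d.gcd (Fintype.card F - 1)) :=
    Fintype.mem_piFinset.mpr fun _ => mem_range.mpr ht
  rw [addConv_sum, sum_congr rfl fun w hw => addConv_extendedPow _ fun i => by
    rw [hψ]; exact mem_range.mp (Fintype.mem_piFinset.mp hw i)]
  rw [sum_add_distrib, sum_ite_eq', if_pos hzero_mem, ← sum_filter, ← mul_sum, hψ]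
  simp_rw [pow_mul' T, Nat.add_sub_cancel]
  ring
end

section
/- Let q be a prime power, d = h₁+⋯+h_n with gcd(h₁,…,h_n)=1, t = gcd(d, q-1), W = {w ∈ Z^n : 0 ≤ w_i < t, ∑w_i ≡ 0 (mod t)}, and ∼_h the equivalence on W given by differing by a multiple mod t of h = (h₁,…,h_n). Then ∑_{s=0}^{(q-1)/t - 1} ∑_{w∈W} ∏_{i=1}^n g(T^{w_i(q-1)/t + h_i s})·g(T^{-ds})·T^{ds}(-dλ) = ∑_{s=0}^{q-2} ∑_{[w]∈W/∼_h} ∏_{i=1}^n g(T^{w_i(q-1)/t + h_i s})·g(T^{-ds})·T^{ds}(-dλ), and the right-hand side is independent of the choice of equivalence class representatives. -/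
private lemma sum_range_mul_aux {M : Type*} [AddCommMonoid M] (f : ℕ → M) (a b : ℕ) :
    ∑ x ∈ Finset.range (a * b), f x
      = ∑ j ∈ Finset.range b, ∑ s ∈ Finset.range a, f (a * j + s) := by
  induction b with
  | zero => simp
  | succ b ih =>
      rw [Nat.mul_succ, Finset.sum_range_add, ih, Finset.sum_range_succ]

private lemma aux_reindex (n t u : ℕ) (ht0 : 0 < t)
    (h : Fin n → ℕ) (hgcd : Finset.univ.gcd h = 1)
    (W R : Finset (Fin n → ℕ))
    (hWmem : ∀ v : Fin n → ℕ, v ∈ W ↔ (∀ i, v i < t) ∧ t ∣ ∑ i, v i)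
    (htd : t ∣ ∑ i, h i)
    (hRW : R ⊆ W)
    (hrep : ∀ w ∈ W, ∃! w', w' ∈ R ∧
      ∃ j : ℤ, ∀ i, (t : ℤ) ∣ ((w i : ℤ) - (w' i : ℤ) - j * (h i : ℤ)))
    (F : (Fin n → ℕ) → ℕ → ℂ)
    (hF : ∀ (j s : ℕ) (w : Fin n → ℕ), w ∈ R →
      F w (u * j + s) = F (fun i => (w i + j * h i) % t) s) :
    ∑ s ∈ Finset.range u, ∑ w ∈ W, F w s
      = ∑ s' ∈ Finset.range (u * t), ∑ w ∈ R, F w s' := by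
  classical
  -- the shift map preserves W
  have hφW : ∀ (j : ℕ) (w : Fin n → ℕ), w ∈ W →
      (fun i => (w i + j * h i) % t) ∈ W := by
    intro j w hw
    obtain ⟨hlt, hdvd⟩ := (hWmem w).mp hw
    refine (hWmem _).mpr ⟨fun i => Nat.mod_lt _ ht0, ?_⟩
    have h1 : (∑ i, (w i + j * h i)) % t = (∑ i, (w i + j * h i) % t) % t :=
      Finset.sum_nat_mod _ _ _
    have h2 : (∑ i, (w i + j * h i)) = (∑ i, w i) + j * ∑ i, h i := by
      rw [Finset.sum_add_distrib, Finset.mul_sum]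
    have h3 : t ∣ ∑ i, (w i + j * h i) := by
      rw [h2]; exact dvd_add hdvd (Dvd.dvd.mul_left htd j)
    have h4 : (∑ i, (w i + j * h i) % t) % t = 0 := by
      rw [← h1]
      obtain ⟨k, hk⟩ := h3
      simp [hk]
    exact Nat.dvd_of_mod_eq_zero h4
  -- cancellation via the gcd condition
  have hcancel : ∀ c : ℕ, c < t → (∀ i, t ∣ c * h i) → c = 0 := by
    intro c hc hci
    have h1 : t ∣ Finset.univ.gcd (fun i => c * h i) :=
      Finset.dvd_gcd fun i _ => hci i
    rw [Finset.gcd_mul_left, hgcd, mul_one, normalize_eq] at h1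
    rcases Nat.eq_zero_or_pos c with h0 | h0
    · exact h0
    · exact absurd (Nat.le_of_dvd h0 h1) (by omega)
  -- divisibility helper
  have hdvd' : ∀ (jj : ℕ) (ww v : Fin n → ℕ),
      (∀ i, (ww i + jj * h i) % t = v i) →
      ∀ i, (t : ℤ) ∣ ((v i : ℤ) - (ww i : ℤ) - (jj : ℤ) * (h i : ℤ)) := by
    intro jj ww v hww i
    have h1 : (ww i + jj * h i) % t ≡ ww i + jj * h i [MOD t] := Nat.mod_modEq _ t
    rw [hww i] at h1
    have h2 := (Nat.modEq_iff_dvd).mp h1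
    push_cast at h2
    have h3 : ((v i : ℤ) - ww i - (jj : ℤ) * h i)
        = -(((ww i : ℤ) + (jj : ℤ) * h i) - v i) := by ring
    rw [h3]
    exact dvd_neg.mpr h2
  -- key bijection
  have key : ∀ G : (Fin n → ℕ) → ℂ,
      (∑ j ∈ Finset.range t, ∑ w ∈ R, G (fun i => (w i + j * h i) % t))
        = ∑ v ∈ W, G v := by
    intro G
    rw [← Finset.sum_product']
    refine Finset.sum_bij (fun p _ => fun i => (p.2 i + p.1 * h i) % t) ?_ ?_ ?_ ?_
    · rintro ⟨j, w⟩ hp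
      simp only [Finset.mem_product, Finset.mem_range] at hp
      exact hφW j w (hRW hp.2)
    · rintro ⟨j, w⟩ hp ⟨j', w'⟩ hp' heq
      simp only [Finset.mem_product, Finset.mem_range] at hp hp'
      obtain ⟨hj, hwR⟩ := hp
      obtain ⟨hj', hwR'⟩ := hp'
      have hvW : (fun i => (w i + j * h i) % t) ∈ W := hφW j w (hRW hwR)
      obtain ⟨wu, hwu, huniq⟩ := hrep _ hvW
      have hw1 : w = wu := huniq w ⟨hwR, (j : ℤ), hdvd' j w _ (fun i => rfl)⟩
      have hw2 : w' = wu := huniq w'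
        ⟨hwR', (j' : ℤ), hdvd' j' w' _ (fun i => (congrFun heq.symm i))⟩
      have hww' : w = w' := hw1.trans hw2.symm
      have hjj : ∀ i, (t : ℤ) ∣ ((j' : ℤ) - j) * h i := by
        intro i
        have a1 := hdvd' j w _ (fun i => rfl) i
        have a2 := hdvd' j' w' (fun i => (w i + j * h i) % t)
          (fun i => (congrFun heq.symm i)) i
        rw [← hww'] at a2
        have h3 : ((j' : ℤ) - j) * h i
            = (((((w i + j * h i) % t : ℕ)) : ℤ) - w i - (j : ℤ) * h i)
              - (((((w i + j * h i) % t : ℕ)) : ℤ) - w i - (j' : ℤ) * h i) := by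
          ring
        rw [h3]
        exact dvd_sub a1 a2
      have hjeq : j = j' := by
        rcases le_total j j' with hle | hle
        · have hnat : ∀ i, t ∣ (j' - j) * h i := by
            intro i
            have := hjj i
            rw [← Nat.cast_sub hle, ← Nat.cast_mul] at this
            exact_mod_cast this
          have := hcancel (j' - j) (by omega) hnat
          omega
        · have hnat : ∀ i, t ∣ (j - j') * h i := by
            intro i
            have h4 : (t : ℤ) ∣ ((j : ℤ) - j') * h i := by
              have h5 := dvd_neg.mpr (hjj i)
              rw [show -(((j' : ℤ) - j) * h i) = ((j : ℤ) - j') * h i by ring] at h5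
              exact h5
            rw [← Nat.cast_sub hle, ← Nat.cast_mul] at h4
            exact_mod_cast h4
          have := hcancel (j - j') (by omega) hnat
          omega
      simp only [Prod.mk.injEq]
      exact ⟨hjeq, hww'⟩
    · intro v hv
      obtain ⟨wu, ⟨hwuR, j, hj⟩, _⟩ := hrep v hv
      have hvlt : ∀ i, v i < t := ((hWmem v).mp hv).1
      have ht0' : (0 : ℤ) < t := by exact_mod_cast ht0
      set j₀ : ℕ := (j % t).toNat with hj₀
      have hj₀c : (j₀ : ℤ) = j % t :=
        Int.toNat_of_nonneg (Int.emod_nonneg j (by exact_mod_cast ht0.ne'))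
      have hj₀lt : j₀ < t := by
        have := Int.emod_lt_of_pos j ht0'
        omega
      have hdj : (t : ℤ) ∣ (j - j₀) := by
        rw [hj₀c, Int.emod_def]
        exact ⟨j / t, by ring⟩
      refine ⟨(j₀, wu), Finset.mem_product.mpr ⟨Finset.mem_range.mpr hj₀lt, hwuR⟩, ?_⟩
      funext i
      show (wu i + j₀ * h i) % t = v i
      have h5 : (t : ℤ) ∣ ((v i : ℤ) - wu i - (j₀ : ℤ) * h i) := by
        have h6 : ((v i : ℤ) - wu i - (j₀ : ℤ) * h i)
            = ((v i : ℤ) - wu i - j * h i) + (j - j₀) * h i := by ring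
        rw [h6]
        exact dvd_add (hj i) (Dvd.dvd.mul_right hdj _)
      have h7 : v i ≡ wu i + j₀ * h i [MOD t] := by
        rw [Nat.modEq_iff_dvd]
        have h8 : ((wu i + j₀ * h i : ℕ) : ℤ) - v i
            = ((v i : ℤ) - wu i - (j₀ : ℤ) * h i) * (-1) := by push_cast; ring
        rw [h8]
        exact Dvd.dvd.mul_right h5 _
      have h9 : v i % t = (wu i + j₀ * h i) % t := h7
      rw [← h9, Nat.mod_eq_of_lt (hvlt i)]
    · rintro ⟨j, w⟩ _
      rfl
  symm
  calc ∑ s' ∈ Finset.range (u * t), ∑ w ∈ R, F w s'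
      = ∑ j ∈ Finset.range t, ∑ s ∈ Finset.range u, ∑ w ∈ R, F w (u * j + s) :=
        sum_range_mul_aux _ u t
    _ = ∑ j ∈ Finset.range t, ∑ s ∈ Finset.range u, ∑ w ∈ R,
          F (fun i => (w i + j * h i) % t) s :=
        Finset.sum_congr rfl fun j _ => Finset.sum_congr rfl fun s _ =>
          Finset.sum_congr rfl fun w hw => hF j s w hw
    _ = ∑ s ∈ Finset.range u, ∑ j ∈ Finset.range t, ∑ w ∈ R,
          F (fun i => (w i + j * h i) % t) s := Finset.sum_comm
    _ = ∑ s ∈ Finset.range u, ∑ v ∈ W, F v s := by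
        exact Finset.sum_congr rfl fun s _ => key (fun v => F v s)

/-- Reindexing of the double character sum: summing over s ∈ {0,…,(q-1)/t - 1} and all
w ∈ W equals summing over s ∈ {0,…,q-2} and any complete system R of representatives
of W/∼ₕ; in particular the latter is independent of the choice of representatives. -/
theorem sum_over_W_eq_sum_over_reps {F : Type} [Field F] [Fintype F] [DecidableEq F]
    (ψ : AddChar F ℂ) (hψ : ψ ≠ 1)
    (n : ℕ) (hn : 0 < n) (h : Fin n → ℕ) (hh : ∀ i, 0 < h i)
    (hgcd : Finset.univ.gcd h = 1)
    (d : ℕ) (hd : d = ∑ i, h i)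
    (t : ℕ) (ht : t = Nat.gcd d (Fintype.card F - 1))
    (lam : F) (hlam : lam ≠ 0)
    (T : MulChar F ℂ) (hT : ∀ χ : MulChar F ℂ, ∃ k : ℕ, χ = T ^ k)
    (W : Finset (Fin n → ℕ))
    (hW : W = (Fintype.piFinset fun _ : Fin n => Finset.range t).filter
        (fun w => t ∣ ∑ i, w i))
    (R : Finset (Fin n → ℕ)) (hRW : R ⊆ W)
    (hrep : ∀ w ∈ W, ∃! w', w' ∈ R ∧
      ∃ j : ℤ, ∀ i, (t : ℤ) ∣ ((w i : ℤ) - (w' i : ℤ) - j * (h i : ℤ))) :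
    ∑ s ∈ Finset.range ((Fintype.card F - 1) / t), ∑ w ∈ W,
        (∏ i, gaussSum (T ^ (w i * ((Fintype.card F - 1) / t) + h i * s)) ψ) *
          gaussSum ((T ^ (d * s))⁻¹) ψ * (T ^ (d * s)) (-((d : F) * lam)) =
      ∑ s ∈ Finset.range (Fintype.card F - 1), ∑ w ∈ R,
        (∏ i, gaussSum (T ^ (w i * ((Fintype.card F - 1) / t) + h i * s)) ψ) *
          gaussSum ((T ^ (d * s))⁻¹) ψ * (T ^ (d * s)) (-((d : F) * lam)) := by
  classical
  have hm : 0 < Fintype.card F - 1 := by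
    have h1 : 1 < Fintype.card F := Fintype.one_lt_card
    omega
  set m : ℕ := Fintype.card F - 1 with hmdef
  have ht0 : 0 < t := by
    rw [ht]; exact Nat.gcd_pos_of_pos_right d hm
  have htm : t ∣ m := by rw [ht]; exact Nat.gcd_dvd_right d m
  have htd : t ∣ d := by rw [ht]; exact Nat.gcd_dvd_left d m
  set u : ℕ := m / t with hudef
  have hmu : u * t = m := Nat.div_mul_cancel htm
  have hdt : t * (d / t) = d := Nat.mul_div_cancel' htd
  -- T ^ m = 1
  have hTm : T ^ m = 1 := by
    refine MulChar.ext fun x => ?_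
    rw [MulChar.pow_apply_coe, MulChar.one_apply_coe, ← map_pow]
    have hx : (x : F) ^ m = 1 :=
      FiniteField.pow_card_sub_one_eq_one (x : F) (Units.ne_zero x)
    rw [hx, map_one]
  have hTmod : ∀ a b : ℕ, a % m = b % m → T ^ a = T ^ b := by
    intro a b hab
    calc T ^ a = T ^ (m * (a / m) + a % m) := by rw [Nat.div_add_mod]
      _ = (T ^ m) ^ (a / m) * T ^ (a % m) := by rw [pow_add, pow_mul]
      _ = T ^ (a % m) := by rw [hTm, one_pow, one_mul]
      _ = (T ^ m) ^ (b / m) * T ^ (b % m) := by rw [hTm, one_pow, one_mul, hab]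
      _ = T ^ (m * (b / m) + b % m) := by rw [pow_add, pow_mul]
      _ = T ^ b := by rw [Nat.div_add_mod]
  have hWmem : ∀ v : Fin n → ℕ, v ∈ W ↔ (∀ i, v i < t) ∧ t ∣ ∑ i, v i := by
    intro v
    rw [hW]
    simp [Fintype.mem_piFinset]
  have main := aux_reindex n t u ht0 h hgcd W R hWmem (hd ▸ htd) hRW hrep
      (fun w s => (∏ i, gaussSum (T ^ (w i * u + h i * s)) ψ) *
          gaussSum ((T ^ (d * s))⁻¹) ψ * (T ^ (d * s)) (-((d : F) * lam)))
      (by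
        intro j s w _
        simp only
        have e2 : d * (u * j + s) = d * s + (d / t * j) * m := by
          calc d * (u * j + s) = d * s + (t * (d / t)) * (u * j) := by rw [hdt]; ring
            _ = d * s + (d / t * j) * (u * t) := by ring
            _ = d * s + (d / t * j) * m := by rw [hmu]
        have hTds : T ^ (d * (u * j + s)) = T ^ (d * s) :=
          hTmod _ _ (by rw [e2, Nat.add_mul_mod_self_right])
        have e1 : ∀ i : Fin n, T ^ (w i * u + h i * (u * j + s))
            = T ^ (((w i + j * h i) % t) * u + h i * s) := by
          intro i
          refine hTmod _ _ ?_
          have hx : (w i + j * h i) % t + t * ((w i + j * h i) / t) = w i + j * h i :=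
            Nat.mod_add_div _ _
          have e1' : w i * u + h i * (u * j + s)
              = ((w i + j * h i) % t) * u + h i * s + ((w i + j * h i) / t) * m := by
            calc w i * u + h i * (u * j + s) = (w i + j * h i) * u + h i * s := by ring
              _ = ((w i + j * h i) % t + t * ((w i + j * h i) / t)) * u + h i * s := by
                  rw [hx]
              _ = ((w i + j * h i) % t) * u + h i * s
                    + ((w i + j * h i) / t) * (u * t) := by ring
              _ = _ := by rw [hmu]
          rw [e1', Nat.add_mul_mod_self_right]
        rw [hTds]
        congr 1
        congr 1
        exact Finset.prod_congr rfl fun i _ => by rw [e1 i])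
  rw [hmu] at main
  exact main
end
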